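/- arXiv:math/0610724 — 2 statements merged into one kernel-verified Lean document; each statement's English description precedes it below -/
import Mathlib

section
/- Let F be a finite extension of ℚ_p and L a biquadratic extension of F with distinct quadratic intermediate fields K, K', K''. Assume: N_{L/K}(L^*) has index 2 in K^*; N_{K/F}(K^*), N_{K'/F}(K'^*), N_{K''/F}(K''^*) are pairwise distinct subgroups of index 2 in F^*, each containing N_{L/F}(L^*); and N_{L/F}(L^*) has index 4 in F^*. Let η_{L/K} : K^* → ℂ^* be a group homomorphism with kernel exactly N_{L/K}(L^*), and let η', η'' : F^* → ℂ^* be group homomorphisms with kernels exactly N_{K'/F}(K'^*) and N_{K''/F}(K''^*) respectively. Then for a group homomorphism μ : K^* → ℂ^*, one has μ ∘ N_{K/F} = η_{L/K} if and only if the restriction of μ to F^* equals η' or equals η''. -/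
/-!
Write `A, A', A''` for the norm groups of `K, K', K''` in `F^*` and `B = N_{L/F}(L^*)`.
Two distinct index-2 subgroups containing `B` meet exactly in `B`, so `F^*/B` is a Klein
four-group and `A, A', A''` are its only index-2 subgroups containing `B`.
If `ν = μ|_{F^*}` satisfies `ν ∘ N_{K/F} = η_{L/K}`, then `ν` kills
`N_{K/F}(N_{L/K} L^*) = B` but not `A`; as `ν` is ±1-valued, `ker ν` is `A'` or `A''`.
Conversely `N_{K/F}⁻¹(A')` has index 2 in `K^*` and contains `N_{L/K}(L^*)`, hence equals it.
In both directions, characters with the same kernel of index 2 coincide, being `-1` off it.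
-/

namespace Subgroup

variable {G : Type*} [Group G]

theorem eq_of_le_of_index_eq {H K : Subgroup G} (h : H ≤ K) (hidx : H.index = K.index)
    (hK : K.index ≠ 0) : H = K := by
  have := relIndex_mul_index h
  rw [hidx, Nat.mul_eq_right hK, relIndex_eq_one] at this
  exact le_antisymm h this

theorem inf_eq_of_index_eq_two {A A' B : Subgroup G} (hA : A.index = 2) (hA' : A'.index = 2)
    (hne : A ≠ A') (hBA : B ≤ A) (hBA' : B ≤ A') (hB : B.index = 4) : A ⊓ A' = B := by
  have hdvd : (A ⊓ A').index ∣ 4 := hB ▸ index_dvd_of_le (le_inf hBA hBA')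
  have hA_dvd : 2 ∣ (A ⊓ A').index := hA ▸ index_dvd_of_le inf_le_left
  have hne2 : (A ⊓ A').index ≠ 2 := by
    intro h2
    have hAA' : A ≤ A' :=
      inf_eq_left.mp (eq_of_le_of_index_eq inf_le_left (by rw [h2, hA]) (by omega))
    exact hne (eq_of_le_of_index_eq hAA' (by rw [hA, hA']) (by omega))
  have h4 : (A ⊓ A').index = 4 := by
    have := Nat.le_of_dvd (by norm_num) hdvd
    have := Nat.pos_of_dvd_of_pos hdvd (by norm_num)
    interval_cases (A ⊓ A').index <;> omega
  exact (eq_of_le_of_index_eq (le_inf hBA hBA') (by rw [hB, h4]) (by omega)).symm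

theorem sq_mem_of_index_eq_two {H : Subgroup G} (hH : H.index = 2) (x : G) : x ^ 2 ∈ H := by
  rw [sq, mul_mem_iff_of_index_two hH]

theorem eq_or_eq_or_eq_of_index_eq_two {A A' A'' B H : Subgroup G} (hA : A.index = 2)
    (hA' : A'.index = 2) (hA'' : A''.index = 2) (hne1 : A ≠ A') (hne2 : A ≠ A'')
    (hne3 : A' ≠ A'') (hBA : B ≤ A) (hBA' : B ≤ A') (hBA'' : B ≤ A'') (hB : B.index = 4)
    (hH : H.index = 2) (hBH : B ≤ H) : H = A ∨ H = A' ∨ H = A'' := by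
  by_contra! ⟨hHA, hHA', hHA''⟩
  have exists_mem_notMem {C : Subgroup G} (hC : C.index = 2) (hBC : B ≤ C) :
      ∃ c ∈ C, c ∉ B := by
    by_contra! h
    rw [le_antisymm h hBC] at hC
    omega
  -- `H` would contain `b * c` for `b ∈ A' \ B` and `c ∈ A'' \ B`, forcing `c ∈ A'`.
  obtain ⟨b, hbA', hbB⟩ := exists_mem_notMem hA' hBA'
  obtain ⟨c, hcA'', hcB⟩ := exists_mem_notMem hA'' hBA''
  have meet {C D : Subgroup G} (hC : C.index = 2) (hD : D.index = 2) (hCD : C ≠ D)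
      (hBC : B ≤ C) (hBD : B ≤ D) {x : G} (hxC : x ∈ C) (hxD : x ∈ D) : x ∈ B :=
    (inf_eq_of_index_eq_two hC hD hCD hBC hBD hB).le ⟨hxC, hxD⟩
  have hbH : b ∉ H := fun h => hbB (meet hH hA' hHA' hBH hBA' h hbA')
  have hcH : c ∉ H := fun h => hcB (meet hH hA'' hHA'' hBH hBA'' h hcA'')
  have hbA : b ∉ A := fun h => hbB (meet hA hA' hne1 hBA hBA' h hbA')
  have hcA : c ∉ A := fun h => hcB (meet hA hA'' hne2 hBA hBA'' h hcA'')
  have hbc : b * c ∈ B := meet hH hA hHA hBH hBA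
    ((mul_mem_iff_of_index_two hH).2 (iff_of_false hbH hcH))
    ((mul_mem_iff_of_index_two hA).2 (iff_of_false hbA hcA))
  have hcA' : c ∈ A' := ((mul_mem_iff_of_index_two hA').1 (hBA' hbc)).1 hbA'
  exact hcB (meet hA' hA'' hne3 hBA' hBA'' hcA' hcA'')

theorem index_comap_eq_two {G' : Type*} [Group G'] {A : Subgroup G} {f : G' →* G}
    (hA : A.index = 2) (hf : ¬f.range ≤ A) : (A.comap f).index = 2 := by
  have := normal_of_index_eq_two hA
  rw [index_comap]
  have hdvd : A.relIndex f.range ∣ 2 := hA ▸ A.relIndex_dvd_index_of_normal f.range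
  rcases Nat.prime_two.eq_one_or_self_of_dvd _ hdvd with h | h
  · exact absurd (relIndex_eq_one.mp h) hf
  · exact h

end Subgroup

namespace MonoidHom

variable {G M : Type*} [Group G] [CommRing M] [IsDomain M]

theorem apply_eq_neg_one_of_notMem_ker {f : G →* Mˣ} (hf : f.ker.index = 2) {x : G}
    (hx : x ∉ f.ker) : f x = -1 := by
  have hsq : ((f x : Mˣ) : M) ^ 2 = 1 := by
    rw [← Units.val_pow_eq_pow_val, ← map_pow,
      mem_ker.mp (Subgroup.sq_mem_of_index_eq_two hf x), Units.val_one]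
  rcases sq_eq_one_iff.mp hsq with h | h
  · exact absurd (mem_ker.mpr (Units.ext h)) hx
  · exact Units.ext h

theorem eq_of_ker_eq_of_index_eq_two {f g : G →* Mˣ} (hker : f.ker = g.ker)
    (hf : f.ker.index = 2) : f = g := by
  ext1 x
  by_cases hx : x ∈ f.ker
  · rw [mem_ker.mp hx, mem_ker.mp (hker ▸ hx)]
  · rw [apply_eq_neg_one_of_notMem_ker hf hx,
      apply_eq_neg_one_of_notMem_ker (hker ▸ hf) (hker ▸ hx)]

theorem index_ker_eq_two {f : G →* Mˣ} (hsq : ∀ x, x ^ 2 ∈ f.ker) (hf : f.ker ≠ ⊤) :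
    f.ker.index = 2 := by
  have hle : f.range ≤ rootsOfUnity 2 M := by
    rintro _ ⟨x, rfl⟩
    rw [mem_rootsOfUnity, ← map_pow]
    exact hsq x
  have hcard : Nat.card f.range ≤ 2 :=
    (Subgroup.card_le_of_le hle).trans (card_rootsOfUnity M 2)
  have hne : Nat.card f.range ≠ 1 := by
    rwa [Ne, Subgroup.card_eq_one, range_eq_bot_iff, ← ker_eq_top_iff]
  have : Finite f.range := Finite.of_injective _ (Subgroup.inclusion_injective hle)
  have : Nat.card f.range ≠ 0 := Nat.card_pos.ne'
  rw [Subgroup.index_ker]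
  omega

section

variable {H P : Type*} [Group H] [Group P] {f : H →* G} {g : P →* H} {η : H →* Mˣ}

theorem comp_eq_of_ker_eq {A : Subgroup G} {χ : G →* Mˣ} (hg : g.range.index = 2)
    (hf : f.range.index = 2) (hA : A.index = 2) (hne : f.range ≠ A)
    (hBA : (f.comp g).range ≤ A) (hη : η.ker = g.range) (hχ : χ.ker = A) :
    χ.comp f = η := by
  have hle : g.range ≤ (χ.comp f).ker := by
    rintro _ ⟨z, rfl⟩
    rw [← comap_ker, hχ]
    exact hBA ⟨z, rfl⟩
  have hidx : (χ.comp f).ker.index = 2 := by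
    rw [← comap_ker, hχ]
    exact Subgroup.index_comap_eq_two hA fun h =>
      hne (Subgroup.eq_of_le_of_index_eq h (by rw [hf, hA]) (by omega))
  refine eq_of_ker_eq_of_index_eq_two ?_ hidx
  rw [hη, Subgroup.eq_of_le_of_index_eq hle (by rw [hg, hidx]) (by omega)]

theorem eq_or_eq_of_comp_eq {A' A'' : Subgroup G} {η' η'' ν : G →* Mˣ}
    (hg : g.range.index = 2) (hf : f.range.index = 2) (hA' : A'.index = 2)
    (hA'' : A''.index = 2) (hne1 : f.range ≠ A') (hne2 : f.range ≠ A'') (hne3 : A' ≠ A'')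
    (hB : (f.comp g).range.index = 4) (hBA' : (f.comp g).range ≤ A')
    (hBA'' : (f.comp g).range ≤ A'') (hη : η.ker = g.range) (hη' : η'.ker = A')
    (hη'' : η''.ker = A'') (h : ν.comp f = η) : ν = η' ∨ ν = η'' := by
  have hBA : (f.comp g).range ≤ f.range := by
    rw [range_comp]
    exact Subgroup.map_le_range f g.range
  have hBν : (f.comp g).range ≤ ν.ker := by
    rintro _ ⟨z, rfl⟩
    show (ν.comp f) (g z) = 1
    rw [h, ← mem_ker, hη]
    exact ⟨z, rfl⟩
  have hfν : ¬f.range ≤ ν.ker := by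
    intro hle
    have : η.ker = ⊤ := by
      rw [← h, eq_top_iff]
      exact fun x _ => hle ⟨x, rfl⟩
    rw [hη] at this
    rw [this, Subgroup.index_top] at hg
    omega
  have hsq (x : G) : x ^ 2 ∈ (f.comp g).range :=
    (Subgroup.inf_eq_of_index_eq_two hf hA' hne1 hBA hBA' hB).le
      ⟨Subgroup.sq_mem_of_index_eq_two hf x, Subgroup.sq_mem_of_index_eq_two hA' x⟩
  have hν : ν.ker.index = 2 :=
    index_ker_eq_two (fun x => hBν (hsq x)) fun htop => hfν (htop ▸ le_top)
  rcases Subgroup.eq_or_eq_or_eq_of_index_eq_two hf hA' hA'' hne1 hne2 hne3 hBA hBA' hBA''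
    hB hν hBν with hker | hker | hker
  · exact absurd hker.ge hfν
  · exact .inl (eq_of_ker_eq_of_index_eq_two (hker.trans hη'.symm) hν)
  · exact .inr (eq_of_ker_eq_of_index_eq_two (hker.trans hη''.symm) hν)

end

end MonoidHom

theorem Algebra.units_map_norm_comp {R S A : Type*} [CommRing R] [CommRing S] [Ring A]
    [Algebra R S] [Algebra R A] [Algebra S A] [IsScalarTower R S A] [Module.Free R S]
    [Module.Free S A] :
    (Units.map (Algebra.norm R : S →* R)).comp (Units.map (Algebra.norm S : A →* S)) =
      Units.map (Algebra.norm R : A →* R) := by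
  rw [← Units.map_comp]
  congr 1
  ext a
  exact Algebra.norm_norm

theorem stmt_12_general
    (F K K' K'' L : Type*) [Field F] [Field K] [Field K'] [Field K''] [Field L]
    [Algebra F K] [Algebra F K'] [Algebra F K''] [Algebra F L]
    [Algebra K L]
    [IsScalarTower F K L]
    -- `N_{L/K}(L^*)` has index 2 in `K^*`
    (hLK : ((Units.map (Algebra.norm K : L →* K)).range : Subgroup Kˣ).index = 2)
    -- the three norm groups in `F^*` are pairwise distinct, of index 2, and contain
    -- `N_{L/F}(L^*)`
    (hne1 : (Units.map (Algebra.norm F : K →* F)).range ≠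
      (Units.map (Algebra.norm F : K' →* F)).range)
    (hne2 : (Units.map (Algebra.norm F : K →* F)).range ≠
      (Units.map (Algebra.norm F : K'' →* F)).range)
    (hne3 : (Units.map (Algebra.norm F : K' →* F)).range ≠
      (Units.map (Algebra.norm F : K'' →* F)).range)
    (hiK : ((Units.map (Algebra.norm F : K →* F)).range : Subgroup Fˣ).index = 2)
    (hiK' : ((Units.map (Algebra.norm F : K' →* F)).range : Subgroup Fˣ).index = 2)
    (hiK'' : ((Units.map (Algebra.norm F : K'' →* F)).range : Subgroup Fˣ).index = 2)
    (hcK' : (Units.map (Algebra.norm F : L →* F)).range ≤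
      (Units.map (Algebra.norm F : K' →* F)).range)
    (hcK'' : (Units.map (Algebra.norm F : L →* F)).range ≤
      (Units.map (Algebra.norm F : K'' →* F)).range)
    -- `N_{L/F}(L^*)` has index 4 in `F^*`
    (hiL : ((Units.map (Algebra.norm F : L →* F)).range : Subgroup Fˣ).index = 4)
    (η : Kˣ →* ℂˣ) (hη : η.ker = (Units.map (Algebra.norm K : L →* K)).range)
    (η' : Fˣ →* ℂˣ) (hη' : η'.ker = (Units.map (Algebra.norm F : K' →* F)).range)
    (η'' : Fˣ →* ℂˣ) (hη'' : η''.ker = (Units.map (Algebra.norm F : K'' →* F)).range)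
    (μ : Kˣ →* ℂˣ) :
    (∀ x : Kˣ, μ (Units.map (algebraMap F K : F →* K)
        (Units.map (Algebra.norm F : K →* F) x)) = η x) ↔
    ((∀ x : Fˣ, μ (Units.map (algebraMap F K : F →* K) x) = η' x) ∨
     (∀ x : Fˣ, μ (Units.map (algebraMap F K : F →* K) x) = η'' x)) := by
  rw [← Algebra.units_map_norm_comp (S := K)] at hiL hcK' hcK''
  set ν := μ.comp (Units.map (algebraMap F K : F →* K))
  have key : ν.comp (Units.map (Algebra.norm F : K →* F)) = η ↔ ν = η' ∨ ν = η'' := by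
    refine ⟨MonoidHom.eq_or_eq_of_comp_eq hLK hiK hiK' hiK'' hne1 hne2 hne3 hiL hcK' hcK''
      hη hη' hη'', ?_⟩
    rintro (rfl | rfl)
    · exact MonoidHom.comp_eq_of_ker_eq hLK hiK hiK' hne1 hcK' hη hη'
    · exact MonoidHom.comp_eq_of_ker_eq hLK hiK hiK'' hne2 hcK'' hη hη''
  simpa only [ν, MonoidHom.ext_iff, MonoidHom.comp_apply] using key

/-- For `L/F` biquadratic with quadratic intermediate fields `K, K', K''` and a
character `μ` of `K^*`: `μ ∘ N_{K/F} = η_{L/K}` iff the restriction of `μ` to `F^*`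
equals `η' = η_{K'/F}` or `η'' = η_{K''/F}`. -/
theorem stmt_12 (p : ℕ) [Fact p.Prime]
    (F K K' K'' L : Type*) [Field F] [Field K] [Field K'] [Field K''] [Field L]
    [Algebra ℚ_[p] F] [FiniteDimensional ℚ_[p] F]
    [Algebra F K] [Algebra F K'] [Algebra F K''] [Algebra F L]
    [Algebra K L] [Algebra K' L] [Algebra K'' L]
    [IsScalarTower F K L] [IsScalarTower F K' L] [IsScalarTower F K'' L]
    [IsGalois F L] (hL : Module.finrank F L = 4)
    (hGal : Nonempty ((L ≃ₐ[F] L) ≃* Multiplicative (ZMod 2 × ZMod 2)))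
    (hK : Module.finrank F K = 2) (hK' : Module.finrank F K' = 2)
    (hK'' : Module.finrank F K'' = 2)
    (hd1 : (IsScalarTower.toAlgHom F K L).fieldRange ≠
      (IsScalarTower.toAlgHom F K' L).fieldRange)
    (hd2 : (IsScalarTower.toAlgHom F K L).fieldRange ≠
      (IsScalarTower.toAlgHom F K'' L).fieldRange)
    (hd3 : (IsScalarTower.toAlgHom F K' L).fieldRange ≠
      (IsScalarTower.toAlgHom F K'' L).fieldRange)
    -- `N_{L/K}(L^*)` has index 2 in `K^*`
    (hLK : ((Units.map (Algebra.norm K : L →* K)).range : Subgroup Kˣ).index = 2)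
    -- the three norm groups in `F^*` are pairwise distinct, of index 2, and contain
    -- `N_{L/F}(L^*)`
    (hne1 : (Units.map (Algebra.norm F : K →* F)).range ≠
      (Units.map (Algebra.norm F : K' →* F)).range)
    (hne2 : (Units.map (Algebra.norm F : K →* F)).range ≠
      (Units.map (Algebra.norm F : K'' →* F)).range)
    (hne3 : (Units.map (Algebra.norm F : K' →* F)).range ≠
      (Units.map (Algebra.norm F : K'' →* F)).range)
    (hiK : ((Units.map (Algebra.norm F : K →* F)).range : Subgroup Fˣ).index = 2)
    (hiK' : ((Units.map (Algebra.norm F : K' →* F)).range : Subgroup Fˣ).index = 2)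
    (hiK'' : ((Units.map (Algebra.norm F : K'' →* F)).range : Subgroup Fˣ).index = 2)
    (hcK : (Units.map (Algebra.norm F : L →* F)).range ≤
      (Units.map (Algebra.norm F : K →* F)).range)
    (hcK' : (Units.map (Algebra.norm F : L →* F)).range ≤
      (Units.map (Algebra.norm F : K' →* F)).range)
    (hcK'' : (Units.map (Algebra.norm F : L →* F)).range ≤
      (Units.map (Algebra.norm F : K'' →* F)).range)
    -- `N_{L/F}(L^*)` has index 4 in `F^*`
    (hiL : ((Units.map (Algebra.norm F : L →* F)).range : Subgroup Fˣ).index = 4)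
    (η : Kˣ →* ℂˣ) (hη : η.ker = (Units.map (Algebra.norm K : L →* K)).range)
    (η' : Fˣ →* ℂˣ) (hη' : η'.ker = (Units.map (Algebra.norm F : K' →* F)).range)
    (η'' : Fˣ →* ℂˣ) (hη'' : η''.ker = (Units.map (Algebra.norm F : K'' →* F)).range)
    (μ : Kˣ →* ℂˣ) :
    (∀ x : Kˣ, μ (Units.map (algebraMap F K : F →* K)
        (Units.map (Algebra.norm F : K →* F) x)) = η x) ↔
    ((∀ x : Fˣ, μ (Units.map (algebraMap F K : F →* K) x) = η' x) ∨
     (∀ x : Fˣ, μ (Units.map (algebraMap F K : F →* K) x) = η'' x)) :=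
  stmt_12_general F K K' K'' L hLK hne1 hne2 hne3 hiK hiK' hiK'' hcK' hcK'' hiL η hη η' hη' η'' hη''
    μ
end

section
/- Let F be a finite extension of ℚ_p and L a cyclic extension of F of degree 4, with K the unique intermediate field satisfying [K : F] = 2. Assume: N_{L/F}(L^*) has index 4 in F^* and the quotient group F^*/N_{L/F}(L^*) is cyclic; and N_{L/K}(L^*) has index 2 in K^*. Let η_{L/K} : K^* → ℂ^* be a group homomorphism with kernel exactly N_{L/K}(L^*). Then for a group homomorphism μ : K^* → ℂ^*, one has μ ∘ N_{K/F} = η_{L/K} if and only if the restriction of μ to F^* is trivial on N_{L/F}(L^*) and has order 4 (i.e., it generates the character group of the cyclic group F^*/N_{L/F}(L^*) of order 4). -/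
private lemma aux_sq_root {Q : Type*} [Group Q] [IsCyclic Q] (hQ : Nat.card Q = 4)
    {q : Q} (hq : q ^ 2 = 1) : ∃ r : Q, r ^ 2 = q := by
  obtain ⟨g, hg⟩ := IsCyclic.exists_generator (α := Q)
  have hord : orderOf g = 4 := by
    rw [orderOf_eq_card_of_forall_mem_zpowers hg, hQ]
  obtain ⟨k, hk⟩ := hg q
  simp only at hk
  have h1 : g ^ (k * 2) = 1 := by
    rw [zpow_mul, hk]
    exact_mod_cast hq
  have hdvd : ((4 : ℕ) : ℤ) ∣ k * 2 := by
    rw [← hord]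
    exact orderOf_dvd_iff_zpow_eq_one.mpr h1
  obtain ⟨m, hm⟩ : (2 : ℤ) ∣ k := by omega
  refine ⟨g ^ m, ?_⟩
  rw [← hk, hm]
  group

/-- For `L/F` cyclic of degree 4 with quadratic intermediate field `K` and a character
`μ` of `K^*`: `μ ∘ N_{K/F} = η_{L/K}` iff the restriction of `μ` to `F^*` is trivial
on `N_{L/F}(L^*)` and has order 4. -/
theorem stmt_13 (p : ℕ) [Fact p.Prime]
    (F K L : Type*) [Field F] [Field K] [Field L]
    [Algebra ℚ_[p] F] [FiniteDimensional ℚ_[p] F]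
    [Algebra F K] [Algebra K L] [Algebra F L] [IsScalarTower F K L]
    [IsGalois F L] (hL : Module.finrank F L = 4)
    (hGal : Nonempty ((L ≃ₐ[F] L) ≃* Multiplicative (ZMod 4)))
    (hK : Module.finrank F K = 2)
    -- `N_{L/F}(L^*)` has index 4 in `F^*` and the quotient is cyclic
    (hiL : ((Units.map (Algebra.norm F : L →* F)).range : Subgroup Fˣ).index = 4)
    (hcyc : IsCyclic (Fˣ ⧸ (Units.map (Algebra.norm F : L →* F)).range))
    -- `N_{L/K}(L^*)` has index 2 in `K^*`
    (hLK : ((Units.map (Algebra.norm K : L →* K)).range : Subgroup Kˣ).index = 2)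
    (η : Kˣ →* ℂˣ) (hη : η.ker = (Units.map (Algebra.norm K : L →* K)).range)
    (μ : Kˣ →* ℂˣ) :
    (∀ x : Kˣ, μ (Units.map (algebraMap F K : F →* K)
        (Units.map (Algebra.norm F : K →* F) x)) = η x) ↔
    ((∀ y : Lˣ, μ (Units.map (algebraMap F K : F →* K)
        (Units.map (Algebra.norm F : L →* F) y)) = 1) ∧
      orderOf (μ.comp (Units.map (algebraMap F K : F →* K))) = 4) := by
  haveI : CharZero F := charZero_of_injective_algebraMap (algebraMap ℚ_[p] F).injective
  haveI : CharZero K := charZero_of_injective_algebraMap (algebraMap F K).injective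
  haveI : FiniteDimensional F L := Module.finite_of_finrank_pos (by rw [hL]; norm_num)
  haveI : FiniteDimensional F K := Module.finite_of_finrank_pos (by rw [hK]; norm_num)
  haveI : FiniteDimensional K L := FiniteDimensional.right F K L
  haveI := hcyc
  set ι : Fˣ →* Kˣ := Units.map (algebraMap F K : F →* K) with hι
  set NKF : Kˣ →* Fˣ := Units.map (Algebra.norm F : K →* F) with hNKF
  set NLK : Lˣ →* Kˣ := Units.map (Algebra.norm K : L →* K) with hNLK
  set NLF : Lˣ →* Fˣ := Units.map (Algebra.norm F : L →* F) with hNLF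
  -- norm transitivity on units
  have htrans : ∀ y : Lˣ, NLF y = NKF (NLK y) := by
    intro y
    ext
    simp [hNLF, hNKF, hNLK, Algebra.norm_norm]
  -- norm of an element of F
  have hpow : ∀ b : Fˣ, NKF (ι b) = b ^ 2 := by
    intro b
    ext
    simp [hNKF, hι, Algebra.norm_algebraMap, hK]
  -- squares in Kˣ are norms from L
  have hKsq : ∀ x : Kˣ, x ^ 2 ∈ NLK.range := fun x => Subgroup.sq_mem_of_index_two hLK x
  -- Fˣ / NLF.range has cardinality 4
  have hcard : Nat.card (Fˣ ⧸ NLF.range) = 4 := hiL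
  haveI : Finite (Fˣ ⧸ NLF.range) := Nat.finite_of_card_ne_zero (by omega)
  have hF4 : ∀ a : Fˣ, a ^ 4 ∈ NLF.range := by
    intro a
    have : ((a : Fˣ ⧸ NLF.range)) ^ 4 = 1 := by
      rw [← hcard]
      exact pow_card_eq_one'
    rw [← QuotientGroup.mk_pow] at this
    exact (QuotientGroup.eq_one_iff _).mp this
  -- square roots of 1 in ℂˣ
  have hpm : ∀ z : ℂˣ, z ^ 2 = 1 → z = 1 ∨ z = -1 := by
    intro z hz
    have hz' : (z : ℂ) ^ 2 = 1 := by rw [← Units.val_pow_eq_pow_val, hz, Units.val_one]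
    have h0 : ((z : ℂ) - 1) * ((z : ℂ) + 1) = 0 := by linear_combination hz'
    rcases mul_eq_zero.mp h0 with h | h
    · left; ext; simpa [sub_eq_zero] using h
    · right; ext
      have : (z : ℂ) = -1 := by linear_combination h
      simpa using this
  constructor
  · intro h
    -- triviality on norms from L
    have htriv : ∀ a ∈ NLF.range, μ (ι a) = 1 := by
      rintro a ⟨y, rfl⟩
      rw [htrans y, h (NLK y)]
      have : NLK y ∈ η.ker := hη ▸ ⟨y, rfl⟩
      exact this
    refine ⟨fun y => htriv _ ⟨y, rfl⟩, ?_⟩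
    -- η is nontrivial
    have hηnt : ∃ x : Kˣ, η x ≠ 1 := by
      by_contra hc
      push_neg at hc
      have hker : η.ker = ⊤ := by
        ext x; simp [MonoidHom.mem_ker, hc]
      rw [hη] at hker
      rw [hker, Subgroup.index_top] at hLK
      omega
    obtain ⟨x₀, hx₀⟩ := hηnt
    -- a witness whose value under ν has order 4
    have ha2 : (NKF x₀) ^ 2 ∈ NLF.range := by
      obtain ⟨y, hy⟩ := hKsq x₀
      refine ⟨y, ?_⟩
      rw [htrans y, hy, map_pow]
    have hq2 : ((NKF x₀ : Fˣ ⧸ NLF.range)) ^ 2 = 1 := by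
      rw [← QuotientGroup.mk_pow]
      exact (QuotientGroup.eq_one_iff _).mpr ha2
    obtain ⟨r, hr⟩ := aux_sq_root hcard hq2
    obtain ⟨b, rfl⟩ := QuotientGroup.mk_surjective r
    have hmem : (b ^ 2)⁻¹ * NKF x₀ ∈ NLF.range := by
      rw [← QuotientGroup.eq]
      rw [← QuotientGroup.mk_pow] at hr
      exact hr
    have hb2 : μ (ι b) ^ 2 = η x₀ := by
      have : μ (ι (b ^ 2 * ((b ^ 2)⁻¹ * NKF x₀))) = η x₀ := by
        rw [mul_inv_cancel_left]
        exact h x₀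
      rw [map_mul, map_mul, map_pow, map_pow, htriv _ hmem, mul_one] at this
      exact this
    -- order of ν
    have hpow4 : (μ.comp ι) ^ 4 = 1 := by
      refine MonoidHom.ext fun a => ?_
      show μ (ι a) ^ 4 = 1
      rw [← map_pow, ← map_pow]
      exact htriv _ (hF4 a)
    have hne2 : ¬ (μ.comp ι) ^ 2 = 1 := by
      intro hc
      have : μ (ι b) ^ 2 = 1 := by
        have := congrArg (fun f => f b) hc
        simpa using this
      rw [hb2] at this
      exact hx₀ this
    have hdvd : orderOf (μ.comp ι) ∣ 4 := orderOf_dvd_of_pow_eq_one hpow4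
    have hnd2 : ¬ orderOf (μ.comp ι) ∣ 2 := fun hd =>
      hne2 (orderOf_dvd_iff_pow_eq_one.mp hd)
    have hle : orderOf (μ.comp ι) ≤ 4 := Nat.le_of_dvd (by norm_num) hdvd
    interval_cases h : orderOf (μ.comp ι) <;> omega
  · rintro ⟨h1, h4⟩
    intro x
    have htriv : ∀ a ∈ NLF.range, μ (ι a) = 1 := by
      rintro a ⟨y, rfl⟩
      exact h1 y
    -- a witness b with μ(ι b)² ≠ 1
    have hν2 : ¬ (μ.comp ι) ^ 2 = 1 := by
      intro hc
      have : orderOf (μ.comp ι) ∣ 2 := orderOf_dvd_of_pow_eq_one hc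
      rw [h4] at this
      omega
    have hb : ∃ b : Fˣ, μ (ι b) ^ 2 ≠ 1 := by
      by_contra hc
      push_neg at hc
      apply hν2
      refine MonoidHom.ext fun b => ?_
      exact hc b
    obtain ⟨b, hbne⟩ := hb
    -- the values of μ ∘ ι ∘ NKF square to 1
    have hχnorm : ∀ z : Kˣ, z ∈ NLK.range → μ (ι (NKF z)) = 1 := by
      rintro z ⟨y, rfl⟩
      rw [← htrans y]
      exact h1 y
    have hχ2 : ∀ z : Kˣ, μ (ι (NKF z)) ^ 2 = 1 := by
      intro z
      rw [← map_pow, ← map_pow, ← map_pow]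
      exact hχnorm _ (hKsq z)
    -- value at ι b
    have hzval : μ (ι (NKF (ι b))) ≠ 1 := by
      rw [hpow b, map_pow, map_pow]
      exact hbne
    have hznot : ι b ∉ NLK.range := fun hmem => hzval (hχnorm _ hmem)
    by_cases hx : x ∈ NLK.range
    · rw [hχnorm x hx]
      have hker : x ∈ η.ker := by rw [hη]; exact hx
      exact (hker : η x = 1).symm
    · -- both sides are -1
      have hηx : η x ≠ 1 := by
        intro hc
        exact hx (by rw [← hη]; exact (hc : x ∈ η.ker))
      have hηx2 : η x ^ 2 = 1 := by
        rw [← map_pow]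
        have hker : x ^ 2 ∈ η.ker := by rw [hη]; exact hKsq x
        exact hker
      have hηm1 : η x = -1 := (hpm _ hηx2).resolve_left hηx
      have hzm1 : μ (ι (NKF (ι b))) = -1 := (hpm _ (hχ2 (ι b))).resolve_left hzval
      have hmul : x * ι b ∈ NLK.range := by
        rw [Subgroup.mul_mem_iff_of_index_two hLK]
        simp [hx, hznot]
      have := hχnorm _ hmul
      rw [map_mul, map_mul, map_mul] at this
      rw [hzm1] at this
      have hxval : μ (ι (NKF x)) = -1 := by
        have h2 : (μ (ι (NKF x)) : ℂ) * (-1) = 1 := by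
          have := congrArg Units.val this
          simpa using this
        ext
        simp only [Units.val_neg, Units.val_one]
        linear_combination -h2
      rw [hxval, hηm1]
end
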